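/- arXiv:1905.01944 — 2 statements merged into one kernel-verified Lean document; each statement's English description precedes it below -/
import Mathlib

section
/- Let a : Fin n → Fin n → Fin n → ℝ be totally antisymmetric and c(x,y,z) = exp(2πi Σ a_{ijk} x_i y_j z_k). Define the 2-cochain b(u; x, y) = c(u, x, y) on the transformation groupoid of ℝ^n acting on itself by translations. Then the groupoid coboundary (δb)(u; x,y,z) = b(u;x,y)⁻¹ · b(u; x+y, z)⁻¹ · b(u; x, y+z) · b(u+x; y, z) equals c(x,y,z) for all u,x,y,z ∈ ℝ^n. -/
open Complex Real BigOperators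

/-- the 3-cocycle `c` is the transformation-groupoid coboundary of the
2-cochain `b(u; x, y) := c(u, x, y)` for the translation action of ℝⁿ on itself. -/
theorem three_cocycle_is_groupoid_coboundary (n : ℕ) (a : Fin n → Fin n → Fin n → ℝ)
    (hswap12 : ∀ i j k, a i j k = - a j i k)
    (hswap23 : ∀ i j k, a i j k = - a i k j)
    (c : (Fin n → ℝ) → (Fin n → ℝ) → (Fin n → ℝ) → ℂ)
    (hc : ∀ x y z, c x y z =
      Complex.exp (2 * (Real.pi : ℂ) * Complex.I *
        ((∑ i, ∑ j, ∑ k, a i j k * x i * y j * z k : ℝ) : ℂ)))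
    (b : (Fin n → ℝ) → (Fin n → ℝ) → (Fin n → ℝ) → ℂ)
    (hb : ∀ u x y, b u x y = c u x y)
    (u x y z : Fin n → ℝ) :
    (b u x y)⁻¹ * (b u (x + y) z)⁻¹ * b u x (y + z) * b (u + x) y z = c x y z := by
  simp only [hb, hc, ← Complex.exp_neg, ← Complex.exp_add]
  congr 1
  simp only [Pi.add_apply]
  push_cast
  simp only [mul_add, add_mul, Finset.sum_add_distrib]
  ring
end

section
/- Let ℓ : ℝ → ℂ be a continuous, piecewise C² function, periodic (or constant outside a compact set, viewed via compactification as a function on S¹). Then the off-diagonal blocks of the multiplication operator by ℓ with respect to the polarization L²(S¹) = H₊ ⊕ H₋ into nonnegative and negative Fourier modes are Hilbert–Schmidt. Equivalently, Σ_{p ≥ 0, q < 0} |ℓ̂(p - q)|² < ∞, where ℓ̂ denotes Fourier coefficients. -/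
open Complex Real intervalIntegral

/-- The `m`-th Fourier coefficient of a `2π`-periodic function `ℓ : ℝ → ℂ`. -/
noncomputable def fourierCoefCircle (ℓ : ℝ → ℂ) (m : ℤ) : ℂ :=
  (1 / (2 * Real.pi)) * ∫ t in (0 : ℝ)..(2 * Real.pi),
    ℓ t * Complex.exp (-Complex.I * (m : ℂ) * (t : ℂ))

/-- `ℓ` is continuous, `2π`-periodic, and piecewise `C²`: the circle decomposes into
finitely many closed arcs on each of which `ℓ` is `C²`. -/
def PiecewiseC2Circle (ℓ : ℝ → ℂ) : Prop :=
  Continuous ℓ ∧ (∀ t, ℓ (t + 2 * Real.pi) = ℓ t) ∧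
  ∃ (m : ℕ) (u : ℕ → ℝ), 0 < m ∧ u 0 = 0 ∧ u m = 2 * Real.pi ∧
    (∀ i < m, u i < u (i + 1)) ∧
    ∀ i < m, ContDiffOn ℝ 2 ℓ (Set.Icc (u i) (u (i + 1)))

private lemma normE (n : ℤ) (t : ℝ) :
    ‖Complex.exp (-Complex.I * (n : ℂ) * (t : ℂ))‖ = 1 := by
  rw [Complex.norm_exp]
  have : (-Complex.I * (n : ℂ) * (t : ℂ)).re = 0 := by simp
  rw [this, Real.exp_zero]

private lemma contE (c : ℂ) : Continuous (fun t : ℝ => Complex.exp (c * (t : ℂ))) := by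
  fun_prop

private lemma piece_bound (f : ℝ → ℂ) (a b : ℝ) (hab : a < b)
    (hf : ContDiffOn ℝ 2 f (Set.Icc a b)) :
    ∃ K : ℝ, 0 ≤ K ∧ ∀ n : ℤ, 1 ≤ n →
      ‖(∫ t in a..b, f t * Complex.exp (-Complex.I * (n : ℂ) * (t : ℂ)))
        - (f b * Complex.exp (-Complex.I * (n : ℂ) * (b : ℂ))
            - f a * Complex.exp (-Complex.I * (n : ℂ) * (a : ℂ))) / (-Complex.I * (n : ℂ))‖
        ≤ K / (n : ℝ) ^ 2 := by
  have hs : UniqueDiffOn ℝ (Set.Icc a b) := uniqueDiffOn_Icc hab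
  set s := Set.Icc a b with hsdef
  set f' := derivWithin f s with hf'def
  set f'' := derivWithin f' s with hf''def
  have hf1 : ContDiffOn ℝ 1 f' s := hf.derivWithin hs (by norm_num)
  have hf''0 : ContDiffOn ℝ 0 f'' s := hf1.derivWithin hs (by norm_num)
  have hf''c : ContinuousOn f'' s := hf''0.continuousOn
  obtain ⟨M, hM⟩ := isCompact_Icc.exists_bound_of_continuousOn hf''c
  refine ⟨‖f' b‖ + ‖f' a‖ + (b - a) * max M 0,
    add_nonneg (add_nonneg (norm_nonneg _) (norm_nonneg _))
      (mul_nonneg (by linarith) (le_max_right M 0)), fun n hn => ?_⟩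
  set c : ℂ := -Complex.I * (n : ℂ) with hcdef
  have hnpos : (0 : ℝ) < (n : ℝ) := by exact_mod_cast hn.trans_lt' (by norm_num)
  have hcnorm : ‖c‖ = (n : ℝ) := by
    simp [hcdef, _root_.abs_of_pos hnpos]
  have hc : c ≠ 0 := by
    intro hc0
    rw [hc0, norm_zero] at hcnorm
    exact hnpos.ne hcnorm
  have hEnorm : ∀ x : ℝ, ‖Complex.exp (c * (x : ℂ))‖ = 1 := by
    rw [hcdef]; exact normE n

  clear_value c
  -- derivatives at interior points
  have hfd : ∀ x ∈ Set.Ioo a b, HasDerivAt f (f' x) x := by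
    intro x hx
    have hmem : s ∈ nhds x := Icc_mem_nhds hx.1 hx.2
    exact (((hf.differentiableOn (by norm_num)) x ⟨hx.1.le, hx.2.le⟩).hasDerivWithinAt).hasDerivAt hmem
  have hfd' : ∀ x ∈ Set.Ioo a b, HasDerivAt f' (f'' x) x := by
    intro x hx
    have hmem : s ∈ nhds x := Icc_mem_nhds hx.1 hx.2
    exact (((hf1.differentiableOn (by norm_num)) x ⟨hx.1.le, hx.2.le⟩).hasDerivWithinAt).hasDerivAt hmem
  have hEd : ∀ x : ℝ, HasDerivAt (fun t : ℝ => Complex.exp (c * (t : ℂ))) (c * Complex.exp (c * (x : ℂ))) x := by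
    intro x
    have h1 : HasDerivAt (fun t : ℝ => c * (t : ℂ)) c x := by
      simpa using (Complex.ofRealCLM.hasDerivAt (x := x)).const_mul c
    simpa [mul_comm] using h1.cexp
  -- the primitive (division-free)
  set H : ℝ → ℂ := fun t => f t * Complex.exp (c * (t : ℂ)) * c
      - f' t * Complex.exp (c * (t : ℂ)) with hHdef
  have hHder : ∀ x ∈ Set.Ioo a b, HasDerivAt H
      ((c * c) * (f x * Complex.exp (c * (x : ℂ))) - f'' x * Complex.exp (c * (x : ℂ))) x := by
    intro x hx
    have h1 := ((hfd x hx).mul (hEd x)).mul_const c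
    have h2 := (hfd' x hx).mul (hEd x)
    have := h1.sub h2
    exact this.congr_deriv (by ring)
  have hHcont : ContinuousOn H s := by
    have hfc : ContinuousOn f s := hf.continuousOn
    have hf'c : ContinuousOn f' s := hf1.continuousOn
    exact ((hfc.mul (contE c).continuousOn).mul continuousOn_const).sub
      (hf'c.mul (contE c).continuousOn)
  have hint1 : IntervalIntegrable (fun t => f t * Complex.exp (c * (t : ℂ))) MeasureTheory.volume a b := by
    apply ContinuousOn.intervalIntegrable
    rw [Set.uIcc_of_le hab.le]
    exact hf.continuousOn.mul (contE c).continuousOn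
  have hint2 : IntervalIntegrable (fun t => f'' t * Complex.exp (c * (t : ℂ))) MeasureTheory.volume a b := by
    apply ContinuousOn.intervalIntegrable
    rw [Set.uIcc_of_le hab.le]
    exact hf''c.mul (contE c).continuousOn
  have hFTC : ∫ t in a..b, ((c * c) * (f t * Complex.exp (c * (t : ℂ)))
      - f'' t * Complex.exp (c * (t : ℂ))) = H b - H a := by
    apply integral_eq_sub_of_hasDeriv_right_of_le hab.le hHcont
      (fun x hx => (hHder x hx).hasDerivWithinAt)
    exact (hint1.const_mul (c * c)).sub hint2
  have hEq : (c * c) * (∫ t in a..b, f t * Complex.exp (c * (t : ℂ)))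
      - (∫ t in a..b, f'' t * Complex.exp (c * (t : ℂ)))
      = (f b * Complex.exp (c * (b : ℂ)) * c - f' b * Complex.exp (c * (b : ℂ)))
        - (f a * Complex.exp (c * (a : ℂ)) * c - f' a * Complex.exp (c * (a : ℂ))) := by
    rw [← intervalIntegral.integral_const_mul, ← intervalIntegral.integral_sub
      (hint1.const_mul (c * c)) hint2, hFTC]
  -- main identity
  have hkey : (∫ t in a..b, f t * Complex.exp (c * (t : ℂ)))
      - (f b * Complex.exp (c * (b : ℂ)) - f a * Complex.exp (c * (a : ℂ))) / c
      = ((∫ t in a..b, f'' t * Complex.exp (c * (t : ℂ)))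
          - (f' b * Complex.exp (c * (b : ℂ)) - f' a * Complex.exp (c * (a : ℂ)))) / (c * c) := by
    rw [eq_div_iff (mul_ne_zero hc hc), sub_mul, div_mul_eq_mul_div, mul_comm c c,
      mul_div_assoc]
    rw [mul_div_cancel_left₀ _ hc]
    linear_combination hEq
  have hIbound : ‖∫ t in a..b, f'' t * Complex.exp (c * (t : ℂ))‖ ≤ max M 0 * (b - a) := by
    have := intervalIntegral.norm_integral_le_of_norm_le_const
      (a := a) (b := b) (C := max M 0) (f := fun t => f'' t * Complex.exp (c * (t : ℂ))) ?_
    · calc ‖∫ t in a..b, f'' t * Complex.exp (c * (t : ℂ))‖ ≤ max M 0 * |b - a| := this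
        _ = max M 0 * (b - a) := by rw [_root_.abs_of_nonneg (by linarith : (0:ℝ) ≤ b - a)]
    · intro x hx
      rw [Set.uIoc_of_le hab.le] at hx
      rw [norm_mul, hEnorm, mul_one]
      exact (hM x ⟨hx.1.le, hx.2⟩).trans (le_max_left _ _)
  have hccnorm : ‖c * c‖ = (n : ℝ) ^ 2 := by
    rw [norm_mul, hcnorm]; ring
  rw [hkey, norm_div, hccnorm]
  have hb1 : ‖f' b * Complex.exp (c * (b : ℂ))‖ = ‖f' b‖ := by rw [norm_mul, hEnorm, mul_one]
  have ha1 : ‖f' a * Complex.exp (c * (a : ℂ))‖ = ‖f' a‖ := by rw [norm_mul, hEnorm, mul_one]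
  gcongr
  refine (norm_sub_le _ _).trans ?_
  have h2 := norm_sub_le (f' b * Complex.exp (c * (b : ℂ))) (f' a * Complex.exp (c * (a : ℂ)))
  rw [hb1, ha1] at h2
  linarith

private lemma coef_decay (ℓ : ℝ → ℂ) (h : PiecewiseC2Circle ℓ) :
    ∃ C : ℝ, 0 ≤ C ∧ ∀ n : ℤ, 1 ≤ n → ‖fourierCoefCircle ℓ n‖ ≤ C / (n : ℝ) ^ 2 := by
  obtain ⟨hcont, hper, m, u, hm, hu0, hum, hmono, hC2⟩ := h
  have hKex : ∀ i : ℕ, i < m → ∃ K : ℝ, 0 ≤ K ∧ ∀ n : ℤ, 1 ≤ n →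
      ‖(∫ t in u i..u (i+1), ℓ t * Complex.exp (-Complex.I * (n : ℂ) * (t : ℂ)))
        - (ℓ (u (i+1)) * Complex.exp (-Complex.I * (n : ℂ) * ((u (i+1) : ℝ) : ℂ))
            - ℓ (u i) * Complex.exp (-Complex.I * (n : ℂ) * ((u i : ℝ) : ℂ)))
              / (-Complex.I * (n : ℂ))‖ ≤ K / (n : ℝ) ^ 2 :=
    fun i hi => piece_bound ℓ (u i) (u (i+1)) (hmono i hi) (hC2 i hi)
  choose! K hK0 hKb using hKex
  refine ⟨(1 / (2 * Real.pi)) * ∑ i ∈ Finset.range m, K i, ?_, fun n hn => ?_⟩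
  · exact mul_nonneg (by positivity)
      (Finset.sum_nonneg fun i hi => hK0 i (Finset.mem_range.1 hi))
  · have hnpos : (0:ℝ) < (n:ℝ) := by exact_mod_cast hn.trans_lt' (by norm_num)
    have hInt : ∀ k : ℕ, k < m → IntervalIntegrable
        (fun t => ℓ t * Complex.exp (-Complex.I * (n:ℂ) * (t:ℂ)))
        MeasureTheory.volume (u k) (u (k+1)) :=
      fun k _ => (hcont.mul (contE (-Complex.I * (n:ℂ)))).intervalIntegrable _ _
    have hsum := intervalIntegral.sum_integral_adjacent_intervals hInt
    have htel : ∑ i ∈ Finset.range m,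
        (ℓ (u (i+1)) * Complex.exp (-Complex.I * (n:ℂ) * ((u (i+1):ℝ):ℂ))
          - ℓ (u i) * Complex.exp (-Complex.I * (n:ℂ) * ((u i:ℝ):ℂ))) = 0 := by
      rw [Finset.sum_range_sub
        (fun i => ℓ (u i) * Complex.exp (-Complex.I * (n:ℂ) * ((u i:ℝ):ℂ)))]
      rw [hu0, hum]
      have h2π : Complex.exp (-Complex.I * (n:ℂ) * ((2*Real.pi:ℝ):ℂ)) = 1 := by
        have h := Complex.exp_int_mul_two_pi_mul_I (-n)
        rw [← h]; congr 1; push_cast; ring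
      have h0 : Complex.exp (-Complex.I * (n:ℂ) * ((0:ℝ):ℂ)) = 1 := by
        norm_num
      have hl : ℓ (2*Real.pi) = ℓ 0 := by simpa using hper 0
      rw [h2π, h0, hl]; ring
    have hmain : (∫ t in (0:ℝ)..(2*Real.pi), ℓ t * Complex.exp (-Complex.I * (n:ℂ) * (t:ℂ)))
        = ∑ i ∈ Finset.range m,
            ((∫ t in u i..u (i+1), ℓ t * Complex.exp (-Complex.I * (n:ℂ) * (t:ℂ)))
              - (ℓ (u (i+1)) * Complex.exp (-Complex.I * (n:ℂ) * ((u (i+1):ℝ):ℂ))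
                  - ℓ (u i) * Complex.exp (-Complex.I * (n:ℂ) * ((u i:ℝ):ℂ)))
                    / (-Complex.I * (n:ℂ))) := by
      rw [Finset.sum_sub_distrib, ← Finset.sum_div, htel, zero_div, sub_zero, hsum,
        hu0, hum]
    have hbound : ‖∫ t in (0:ℝ)..(2*Real.pi), ℓ t * Complex.exp (-Complex.I * (n:ℂ) * (t:ℂ))‖
        ≤ (∑ i ∈ Finset.range m, K i) / (n:ℝ)^2 := by
      rw [hmain, Finset.sum_div]
      refine (norm_sum_le _ _).trans (Finset.sum_le_sum fun i hi => ?_)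
      exact hKb i (Finset.mem_range.1 hi) n hn
    rw [fourierCoefCircle, norm_mul]
    have hsc : ‖(1 / (2 * (Real.pi:ℂ)))‖ = 1 / (2 * Real.pi) := by
      rw [norm_div, norm_one]
      congr 1
      rw [show (2*(Real.pi:ℂ)) = ((2*Real.pi:ℝ):ℂ) by push_cast; ring, Complex.norm_real,
        Real.norm_eq_abs, _root_.abs_of_pos (by positivity)]
    rw [hsc]
    calc 1 / (2*Real.pi) * ‖∫ t in (0:ℝ)..(2*Real.pi),
          ℓ t * Complex.exp (-Complex.I * (n:ℂ) * (t:ℂ))‖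
        ≤ 1 / (2*Real.pi) * ((∑ i ∈ Finset.range m, K i) / (n:ℝ)^2) := by
          gcongr
      _ = 1 / (2*Real.pi) * (∑ i ∈ Finset.range m, K i) / (n:ℝ)^2 := by ring

/-- for continuous piecewise-`C²` `ℓ` on the circle, the off-diagonal block
of the multiplication operator `M_ℓ` with respect to the polarization into nonnegative
and negative Fourier modes is Hilbert–Schmidt: `Σ_{p ≥ 0, q < 0} |ℓ̂(p - q)|² < ∞`.
Here `p = pq.1 ≥ 0`, `q = -(pq.2 + 1) < 0`, so `p - q = pq.1 + pq.2 + 1`. -/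
theorem offdiagonal_block_hilbert_schmidt (ℓ : ℝ → ℂ) (h : PiecewiseC2Circle ℓ) :
    Summable (fun pq : ℕ × ℕ =>
      ‖fourierCoefCircle ℓ ((pq.1 : ℤ) + (pq.2 : ℤ) + 1)‖ ^ 2) := by
  obtain ⟨C, hC0, hC⟩ := coef_decay ℓ h
  have hone : Summable (fun q : ℕ => 1 / ((q:ℝ)+1)^2) := by
    have h1 := (Real.summable_one_div_nat_pow (p := 2)).2 one_lt_two
    exact ((summable_nat_add_iff 1).2 h1).congr fun q => by push_cast; ring
  have hprod := Summable.mul_of_nonneg hone hone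
    (fun p => by positivity) (fun q => by positivity)
  refine Summable.of_nonneg_of_le (fun pq => by positivity) ?_ (hprod.mul_left (C^2))
  rintro ⟨p, q⟩
  have hn : (1:ℤ) ≤ (p:ℤ) + q + 1 := by omega
  have hb := hC _ hn
  have hcast : (((p:ℤ) + (q:ℤ) + 1 : ℤ) : ℝ) = (p:ℝ) + q + 1 := by push_cast; ring
  rw [hcast] at hb
  have key : ((p:ℝ)+1) * ((q:ℝ)+1) ≤ ((p:ℝ)+q+1)^2 := by
    nlinarith [p.cast_nonneg (α := ℝ), q.cast_nonneg (α := ℝ)]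
  calc ‖fourierCoefCircle ℓ ((p:ℤ) + (q:ℤ) + 1)‖ ^ 2
      ≤ (C / ((p:ℝ)+q+1)^2)^2 := pow_le_pow_left₀ (norm_nonneg _) hb 2
    _ = C^2 / (((p:ℝ)+q+1)^2)^2 := by rw [div_pow]
    _ ≤ C^2 / (((p:ℝ)+1)*((q:ℝ)+1))^2 := by
        gcongr
    _ = C^2 * (1 / ((p:ℝ)+1)^2 * (1 / ((q:ℝ)+1)^2)) := by
        rw [mul_pow]; field_simp
end
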